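/- arXiv:2005.14083 — 3 statements merged into one kernel-verified Lean document; each statement's English description precedes it below -/
import Mathlib

section
/- Let g(x; ξ) = e^{-(x-μ)²/(2σ²)} - e^{-(ξx-μ)²/(2σ²)} with σ > 0, expanded as g(x; ξ) = Σ_{n≥0} c_n(ξ) ψ_n(x; μ, σ) in the orthonormal Hermite-Gaussian basis. Then for ε = ξ - 1 and all k ≥ 1, c_k(ε) = -√(σ k! 2^k / √π) · Σ_{m=0}^{⌊k/2⌋} [(-1)^m / (4^m m! (k-2m)!)] · I_{k-2m}(1 + ε + ε²/2, (εμ/σ)(1+ε), (εμ/σ)²/2). -/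
open Real MeasureTheory

/-- Gaussian moment integrals `I_k(a,b,c) = ∫ u^k e^{-(a u² + b u + c)} du`. -/
noncomputable def gaussI (k : ℕ) (a b c : ℝ) : ℝ :=
  ∫ u : ℝ, u ^ k * Real.exp (-(a * u ^ 2 + b * u + c))

/-- The `n`-th physicist's Hermite polynomial, via the Rodrigues formula. -/
noncomputable def physHermite (n : ℕ) (x : ℝ) : ℝ :=
  (-1 : ℝ) ^ n * Real.exp (x ^ 2) * iteratedDeriv n (fun t : ℝ => Real.exp (-t ^ 2)) x

/-- The generalized Hermite-Gaussian function `ψ_n(x; μ, σ)`. -/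
noncomputable def hermiteGaussian (n : ℕ) (μ σ x : ℝ) : ℝ :=
  (Real.sqrt (σ * 2 ^ n * n.factorial * Real.sqrt Real.pi))⁻¹ *
    physHermite n ((x - μ) / σ) * Real.exp (-(x - μ) ^ 2 / (2 * σ ^ 2))

/-- The difference between a Gaussian and its Doppler-shifted version. -/
noncomputable def dopplerDiff (μ σ ξ x : ℝ) : ℝ :=
  Real.exp (-(x - μ) ^ 2 / (2 * σ ^ 2)) - Real.exp (-(ξ * x - μ) ^ 2 / (2 * σ ^ 2))

/-- The Hermite-Gaussian expansion coefficients `c_n(ξ)` of `g(·; ξ)`. -/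
noncomputable def hgCoeff (n : ℕ) (μ σ ξ : ℝ) : ℝ :=
  ∫ x : ℝ, hermiteGaussian n μ σ x * dopplerDiff μ σ ξ x

open Polynomial
open scoped Nat

/-!
Substituting `x = σ u + μ` turns `ψ_k` into a multiple of `H_k(u) e^{-u²/2}` and `g(·; 1 + ε)`
into `e^{-u²/2} - e^{-((1 + ε) u + ε μ / σ)² / 2}`, so `c_k(1 + ε)` is `σ / √(σ 2^k k! √π)` times
`∫ H_k(u) (e^{-u²} - e^{-(a u² + b u + c)}) du`. The first integral vanishes for `k ≥ 1`: by
Rodrigues' formula `H_k(u) e^{-u²}` is, up to sign, the derivative of the integrable function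
`(d/du)^{k-1} e^{-u²}`. Expanding `H_k` in monomials (its coefficients come from Mathlib's
probabilists' Hermite polynomials through `H_k(x) = √2^k He_k(√2 x)`) turns the second integral
into the stated combination of the Gaussian moments `I_{k-2m}(a, b, c)`.
-/

theorem sum_range_succ_eq_sum_sub_two_mul {M : Type*} [AddCommMonoid M] {k : ℕ} {f : ℕ → M}
    (hf : ∀ j ≤ k, Odd (k + j) → f j = 0) :
    ∑ j ∈ Finset.range (k + 1), f j = ∑ m ∈ Finset.range (k / 2 + 1), f (k - 2 * m) := by
  rw [← Finset.sum_image (g := fun m => k - 2 * m) fun m₁ h₁ m₂ h₂ h => by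
    simp only [Finset.coe_range, Set.mem_Iio] at h₁ h₂ h; omega]
  refine (Finset.sum_subset ?_ fun j hj hj' => hf j ?_ ?_).symm
  · intro j
    simp only [Finset.mem_image, Finset.mem_range]
    omega
  · simp only [Finset.mem_range] at hj; omega
  · simp only [Finset.mem_range, Finset.mem_image, not_exists, not_and] at hj hj'
    have := hj' ((k - j) / 2)
    rw [Nat.odd_iff]
    omega

theorem doubleFactorial_two_mul_sub_one_mul (m : ℕ) : (2 * m - 1)‼ * (2 ^ m * m !) = (2 * m)! := by
  cases m with
  | zero => rfl
  | succ m =>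
    rw [← Nat.doubleFactorial_two_mul, show 2 * (m + 1) = 2 * m + 1 + 1 by ring,
      Nat.factorial_eq_mul_doubleFactorial, Nat.add_sub_cancel, mul_comm]

noncomputable def physHermiteCoeff (k m : ℕ) : ℝ :=
  (-1) ^ m * k ! * 2 ^ (k - 2 * m) / (m ! * (k - 2 * m)!)

theorem physHermite_eq_aeval_hermite (n : ℕ) (x : ℝ) :
    physHermite n x = √2 ^ n * aeval (√2 * x) (hermite n) := by
  have hgauss : (fun t : ℝ => exp (-t ^ 2)) = fun t => exp (-((√2 * t) ^ 2 / 2)) := by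
    ext t; rw [mul_pow, sq_sqrt zero_le_two]; ring_nf
  have hsmooth : ContDiff ℝ n fun y : ℝ => exp (-(y ^ 2 / 2)) := by fun_prop
  rw [physHermite, hgauss, iteratedDeriv_comp_const_mul hsmooth, iteratedDeriv_eq_iterate]
  dsimp only
  rw [deriv_gaussian_eq_hermite_mul_gaussian, ← congrFun hgauss x]
  have hexp : exp (x ^ 2) * exp (-x ^ 2) = 1 := by rw [← exp_add]; simp
  have hsign : (-1 : ℝ) ^ n * (-1) ^ n = 1 := by rw [← mul_pow]; norm_num
  linear_combination (√2 ^ n * aeval (√2 * x) (hermite n)) * ((-1) ^ n * (-1) ^ n * hexp + hsign)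

theorem coeff_hermite_mul_sqrt_two_pow (m j : ℕ) :
    ((hermite (2 * m + j)).coeff j : ℝ) * √2 ^ (2 * m + j + j) =
      physHermiteCoeff (2 * m + j) m := by
  have hfact : ((2 * m - 1)‼ : ℝ) * (2 ^ m * m !) = (2 * m)! := by
    exact_mod_cast doubleFactorial_two_mul_sub_one_mul m
  rw [coeff_hermite_explicit, show 2 * m + j + j = 2 * (m + j) by ring, pow_mul,
    sq_sqrt zero_le_two, physHermiteCoeff, Nat.add_sub_cancel_left]
  push_cast
  rw [Nat.cast_choose ℝ (Nat.le_add_left j (2 * m)), Nat.add_sub_cancel, pow_add, ← hfact]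
  field_simp

theorem physHermite_eq_sum (k : ℕ) (x : ℝ) :
    physHermite k x =
      ∑ m ∈ Finset.range (k / 2 + 1), physHermiteCoeff k m * x ^ (k - 2 * m) := by
  rw [physHermite_eq_aeval_hermite, aeval_eq_sum_range, natDegree_hermite, Finset.mul_sum,
    sum_range_succ_eq_sum_sub_two_mul]
  · refine Finset.sum_congr rfl fun m hm => ?_
    obtain ⟨j, rfl⟩ : ∃ j, k = 2 * m + j := ⟨k - 2 * m, by simp at hm; omega⟩
    rw [Nat.add_sub_cancel_left, ← coeff_hermite_mul_sqrt_two_pow, zsmul_eq_mul,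
      pow_add _ (2 * m + j)]
    ring
  · intro j _ hodd
    rw [coeff_hermite_of_odd_add hodd, zero_smul, mul_zero]

theorem iteratedDeriv_exp_neg_sq (n : ℕ) (x : ℝ) :
    iteratedDeriv n (fun t : ℝ => exp (-t ^ 2)) x = (-1) ^ n * physHermite n x * exp (-x ^ 2) := by
  have hexp : exp (x ^ 2) * exp (-x ^ 2) = 1 := by rw [← exp_add]; simp
  have hsign : (-1 : ℝ) ^ n * (-1) ^ n = 1 := by rw [← mul_pow]; norm_num
  rw [physHermite]
  linear_combination
    (-iteratedDeriv n (fun t : ℝ => exp (-t ^ 2)) x) * ((-1) ^ n * (-1) ^ n * hexp + hsign)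

theorem integrable_pow_mul_exp_neg_quadratic (n : ℕ) {a : ℝ} (ha : 0 < a) (b c : ℝ) :
    Integrable fun u : ℝ => u ^ n * exp (-(a * u ^ 2 + b * u + c)) := by
  have hgauss : Integrable fun u : ℝ => u ^ n * exp (-(a / 2) * u ^ 2) := by
    simpa only [rpow_natCast] using
      integrable_rpow_mul_exp_neg_mul_sq (half_pos ha) (s := n)
        (by linarith [n.cast_nonneg (α := ℝ)])
  have hbound : ∀ u : ℝ, ‖exp (-(a / 2 * u ^ 2 + b * u + c))‖ ≤ exp (b ^ 2 / (2 * a) - c) := by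
    intro u
    rw [norm_of_nonneg (exp_nonneg _), exp_le_exp, ← sub_nonneg]
    have hsquare :
        b ^ 2 / (2 * a) - c + (a / 2 * u ^ 2 + b * u + c) = (a * u + b) ^ 2 / (2 * a) := by
      field_simp; ring
    rw [sub_neg_eq_add, hsquare]
    positivity
  refine (hgauss.mul_bdd (by fun_prop) (Filter.Eventually.of_forall hbound)).congr
    (Filter.Eventually.of_forall fun u => ?_)
  dsimp only
  rw [mul_assoc, ← exp_add]
  ring_nf

theorem integrable_pow_mul_exp_neg_sq (n : ℕ) :
    Integrable fun u : ℝ => u ^ n * exp (-u ^ 2) := by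
  simpa using integrable_pow_mul_exp_neg_quadratic n one_pos 0 0

theorem integrable_physHermite_mul {w : ℝ → ℝ} (hw : ∀ n : ℕ, Integrable fun u => u ^ n * w u)
    (k : ℕ) : Integrable fun u => physHermite k u * w u := by
  simp_rw [physHermite_eq_sum, Finset.sum_mul, mul_assoc]
  exact integrable_finsetSum _ fun m _ => (hw _).const_mul _

theorem integral_physHermite_mul {w : ℝ → ℝ} (hw : ∀ n : ℕ, Integrable fun u => u ^ n * w u)
    (k : ℕ) :
    ∫ u, physHermite k u * w u =
      ∑ m ∈ Finset.range (k / 2 + 1), physHermiteCoeff k m * ∫ u, u ^ (k - 2 * m) * w u := by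
  simp_rw [physHermite_eq_sum, Finset.sum_mul, mul_assoc]
  rw [integral_finsetSum _ fun m _ => (hw _).const_mul _]
  simp_rw [integral_const_mul]

theorem integral_physHermite_mul_exp_neg_sq {k : ℕ} (hk : 0 < k) :
    ∫ u, physHermite k u * exp (-u ^ 2) = 0 := by
  obtain ⟨j, rfl⟩ := Nat.exists_eq_add_of_lt hk
  have hint (n : ℕ) : Integrable (iteratedDeriv n fun t : ℝ => exp (-t ^ 2)) := by
    rw [funext (iteratedDeriv_exp_neg_sq n)]
    simpa only [mul_assoc] using
      (integrable_physHermite_mul integrable_pow_mul_exp_neg_sq n).const_mul ((-1) ^ n)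
  have hderiv (x : ℝ) : HasDerivAt (iteratedDeriv j fun t : ℝ => exp (-t ^ 2))
      (iteratedDeriv (j + 1) (fun t : ℝ => exp (-t ^ 2)) x) x := by
    rw [iteratedDeriv_succ]
    exact ((ContDiff.differentiable_iteratedDeriv (n := ⊤) j (by fun_prop) (by simp)) x).hasDerivAt
  have hzero := integral_eq_zero_of_hasDerivAt_of_integrable hderiv (hint _) (hint _)
  simp_rw [iteratedDeriv_exp_neg_sq, mul_assoc, integral_const_mul] at hzero
  simpa using hzero

theorem hermiteGaussian_mul_dopplerDiff_affine {σ : ℝ} (hσ : σ ≠ 0) (n : ℕ) (μ ε u : ℝ) :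
    hermiteGaussian n μ σ (σ * u + μ) * dopplerDiff μ σ (1 + ε) (σ * u + μ) =
      (√(σ * 2 ^ n * n ! * √π))⁻¹ * (physHermite n u * exp (-u ^ 2) - physHermite n u *
        exp (-((1 + ε + ε ^ 2 / 2) * u ^ 2 + ε * μ / σ * (1 + ε) * u + (ε * μ / σ) ^ 2 / 2))) := by
  have harg : (σ * u + μ - μ) / σ = u := by field_simp; ring
  have hexp₁ : exp (-u ^ 2) = exp (-(σ * u + μ - μ) ^ 2 / (2 * σ ^ 2)) *
      exp (-(σ * u + μ - μ) ^ 2 / (2 * σ ^ 2)) := by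
    rw [← exp_add]; congr 1; field_simp; ring
  have hexp₂ :
      exp (-((1 + ε + ε ^ 2 / 2) * u ^ 2 + ε * μ / σ * (1 + ε) * u + (ε * μ / σ) ^ 2 / 2)) =
      exp (-(σ * u + μ - μ) ^ 2 / (2 * σ ^ 2)) *
        exp (-((1 + ε) * (σ * u + μ) - μ) ^ 2 / (2 * σ ^ 2)) := by
    rw [← exp_add]; congr 1; field_simp; ring
  rw [hermiteGaussian, dopplerDiff, harg, hexp₁, hexp₂]
  ring

theorem hgCoeff_eq_neg_integral {σ : ℝ} (hσ : 0 < σ) {k : ℕ} (hk : 0 < k) (μ ε : ℝ) :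
    hgCoeff k μ σ (1 + ε) = -(σ * (√(σ * 2 ^ k * k ! * √π))⁻¹ * ∫ u, physHermite k u *
      exp (-((1 + ε + ε ^ 2 / 2) * u ^ 2 + ε * μ / σ * (1 + ε) * u + (ε * μ / σ) ^ 2 / 2))) := by
  have ha : 0 < 1 + ε + ε ^ 2 / 2 := by nlinarith [sq_nonneg (1 + ε)]
  have hsubst := Measure.integral_comp_mul_left
    (fun x => hermiteGaussian k μ σ (x + μ) * dopplerDiff μ σ (1 + ε) (x + μ)) σ
  rw [integral_add_right_eq_self (fun x => hermiteGaussian k μ σ x * dopplerDiff μ σ (1 + ε) x),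
    abs_of_pos (inv_pos.mpr hσ), smul_eq_mul, eq_inv_mul_iff_mul_eq₀ hσ.ne'] at hsubst
  rw [hgCoeff, ← hsubst]
  simp_rw [hermiteGaussian_mul_dopplerDiff_affine hσ.ne']
  rw [integral_const_mul,
    integral_sub (integrable_physHermite_mul integrable_pow_mul_exp_neg_sq k)
      (integrable_physHermite_mul (integrable_pow_mul_exp_neg_quadratic · ha _ _) k),
    integral_physHermite_mul_exp_neg_sq hk]
  ring

theorem mul_inv_sqrt_mul_physHermiteCoeff {σ : ℝ} (hσ : 0 < σ) {k m : ℕ} (hm : 2 * m ≤ k) :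
    σ * (√(σ * 2 ^ k * k ! * √π))⁻¹ * physHermiteCoeff k m =
      √(σ * k ! * 2 ^ k / √π) * ((-1) ^ m / (4 ^ m * m ! * (k - 2 * m)!)) := by
  have hpi : 0 < √π := sqrt_pos.mpr pi_pos
  have hX : 0 < σ * 2 ^ k * k ! * √π := by positivity
  have hpow : (2 : ℝ) ^ (k - 2 * m) * 4 ^ m = 2 ^ k := by
    rw [show (4 : ℝ) = 2 ^ 2 by norm_num, ← pow_mul, ← pow_add, Nat.sub_add_cancel hm]
  have hsqrt : √(σ * k ! * 2 ^ k / √π) = σ * k ! * 2 ^ k / √(σ * 2 ^ k * k ! * √π) := by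
    rw [show σ * k ! * 2 ^ k / √π = (σ * k ! * 2 ^ k) ^ 2 / (σ * 2 ^ k * k ! * √π) by
      field_simp, sqrt_div' _ hX.le, sqrt_sq (by positivity)]
  rw [hsqrt, physHermiteCoeff, ← hpow]
  field_simp

theorem hgCoeff_pos (μ σ ε : ℝ) (hσ : 0 < σ) (k : ℕ) (hk : 1 ≤ k) :
    hgCoeff k μ σ (1 + ε) =
      -Real.sqrt (σ * k.factorial * 2 ^ k / Real.sqrt Real.pi) *
        ∑ m ∈ Finset.range (k / 2 + 1),
          (-1 : ℝ) ^ m / (4 ^ m * m.factorial * (k - 2 * m).factorial) *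
            gaussI (k - 2 * m) (1 + ε + ε ^ 2 / 2) ((ε * μ / σ) * (1 + ε))
              ((ε * μ / σ) ^ 2 / 2) := by
  have ha : 0 < 1 + ε + ε ^ 2 / 2 := by nlinarith [sq_nonneg (1 + ε)]
  rw [hgCoeff_eq_neg_integral hσ hk,
    integral_physHermite_mul (integrable_pow_mul_exp_neg_quadratic · ha _ _), Finset.mul_sum,
    Finset.mul_sum, ← Finset.sum_neg_distrib]
  refine Finset.sum_congr rfl fun m hm => ?_
  rw [← gaussI, neg_mul, ← mul_assoc (√_),
    ← mul_inv_sqrt_mul_physHermiteCoeff hσ (by simp at hm; omega)]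
  ring
end

section
/- For σ > 0 and μ ∈ ℝ, let g(x; ξ) = e^{-(x-μ)²/(2σ²)} - e^{-(ξx-μ)²/(2σ²)} and let c_1(ξ) = ∫_{-∞}^{∞} ψ_1(x; μ, σ) g(x; ξ) dx where ψ_1 is the first-degree Hermite-Gaussian function. Then lim_{ξ→1} c_1(ξ)² / ∫_{-∞}^{∞} g(x;ξ)² dx = 1 / (1 + 3σ²/(2μ²)), provided μ ≠ 0. -/
open Real MeasureTheory

/-!
Completing the square in the product of the Gaussian and its Doppler-shifted copy turns both
`c₁(ξ)` and `∫ g²` into explicit Gaussian integrals, with a common factor `exp (-K ξ)`,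
`K ξ = μ² (ξ - 1)² / (2 σ² (1 + ξ²))`. Then `c₁(ξ)²` is `(ξ - 1)²` times a continuous function,
and `∫ g² = σ √π ((1 + ξ⁻¹ - 2 s) + 2 s (1 - exp (-K)))` with `s = √(2 / (1 + ξ²))`, where both
brackets vanish to second order at `ξ = 1`. Dividing numerator and denominator by `(ξ - 1)²`
replaces the two applications of L'Hôpital's rule by limits of continuous functions.
-/

open Filter Topology

section GaussianIntegrals

lemma integral_exp_neg_mul_sub_sq (c x₀ : ℝ) :
    ∫ x : ℝ, exp (-(c * (x - x₀) ^ 2)) = √(π / c) := by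
  rw [integral_sub_right_eq_self (fun x : ℝ => exp (-(c * x ^ 2))) x₀]
  simpa only [neg_mul] using integral_gaussian c

lemma integral_mul_exp_neg_mul_sq_eq_zero (c : ℝ) : ∫ x : ℝ, x * exp (-(c * x ^ 2)) = 0 := by
  have h := integral_neg_eq_self (fun x : ℝ => x * exp (-(c * x ^ 2))) volume
  simp only [neg_sq, neg_mul, integral_neg] at h
  linarith

lemma integral_exp_neg_mul_mul_sub_sq (c ξ m : ℝ) :
    ∫ x : ℝ, exp (-(c * (ξ * x - m) ^ 2)) = |ξ|⁻¹ * √(π / c) := by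
  rw [Measure.integral_comp_mul_left (fun y => exp (-(c * (y - m) ^ 2))) ξ,
    integral_exp_neg_mul_sub_sq, smul_eq_mul, abs_inv]

variable {c : ℝ}

lemma integrable_exp_neg_mul_sub_sq (hc : 0 < c) (x₀ : ℝ) :
    Integrable fun x : ℝ => exp (-(c * (x - x₀) ^ 2)) := by
  simpa only [neg_mul] using (integrable_exp_neg_mul_sq hc).comp_sub_right x₀

lemma integrable_exp_neg_mul_mul_sub_sq (hc : 0 < c) {ξ : ℝ} (hξ : ξ ≠ 0) (m : ℝ) :
    Integrable fun x : ℝ => exp (-(c * (ξ * x - m) ^ 2)) := by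
  simpa only [Function.comp_def] using (integrable_exp_neg_mul_sub_sq hc m).comp_mul_left' hξ

lemma integrable_sub_mul_exp_neg_mul_sub_sq (hc : 0 < c) (m x₀ : ℝ) :
    Integrable fun x : ℝ => (x - m) * exp (-(c * (x - x₀) ^ 2)) := by
  refine (((integrable_mul_exp_neg_mul_sq hc).comp_sub_right x₀).add
    ((integrable_exp_neg_mul_sub_sq hc x₀).const_mul (x₀ - m))).congr (ae_of_all _ fun x => ?_)
  simp only [Pi.add_apply, neg_mul]
  ring

lemma integral_sub_mul_exp_neg_mul_sub_sq (hc : 0 < c) (m x₀ : ℝ) :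
    ∫ x : ℝ, (x - m) * exp (-(c * (x - x₀) ^ 2)) = (x₀ - m) * √(π / c) := by
  have split : ∀ x : ℝ, (x - m) * exp (-(c * (x - x₀) ^ 2)) =
      (x - x₀) * exp (-(c * (x - x₀) ^ 2)) + (x₀ - m) * exp (-(c * (x - x₀) ^ 2)) :=
    fun x => by ring
  simp_rw [split]
  rw [integral_add (integrable_sub_mul_exp_neg_mul_sub_sq hc x₀ x₀)
      ((integrable_exp_neg_mul_sub_sq hc x₀).const_mul _), integral_const_mul,
    integral_exp_neg_mul_sub_sq,
    integral_sub_right_eq_self (fun x : ℝ => x * exp (-(c * x ^ 2))) x₀,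
    integral_mul_exp_neg_mul_sq_eq_zero, zero_add]

end GaussianIntegrals

lemma sqrt_pi_div_div_two_mul_sq {σ : ℝ} (hσ : 0 ≤ σ) (a : ℝ) :
    √(π / (a / (2 * σ ^ 2))) = σ * √π * √(2 / a) := by
  rw [show π / (a / (2 * σ ^ 2)) = σ ^ 2 * π * (2 / a) by rw [div_div_eq_mul_div]; ring,
    sqrt_mul (by positivity), sqrt_mul (by positivity), sqrt_sq hσ]

lemma physHermite_one (x : ℝ) : physHermite 1 x = 2 * x := by
  have hd : HasDerivAt (fun t : ℝ => exp (-t ^ 2)) (exp (-x ^ 2) * -(2 * x)) x := by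
    simpa using ((hasDerivAt_pow 2 x).fun_neg).exp
  have h : exp (x ^ 2) * exp (-x ^ 2) = 1 := by rw [← exp_add, add_neg_cancel, exp_zero]
  rw [physHermite, iteratedDeriv_one, hd.deriv, pow_one]
  linear_combination (2 * x) * h

lemma hermiteGaussian_one (μ σ x : ℝ) :
    hermiteGaussian 1 μ σ x =
      2 / (σ * √(σ * 2 * √π)) * (x - μ) * exp (-(x - μ) ^ 2 / (2 * σ ^ 2)) := by
  rw [hermiteGaussian, physHermite_one]
  norm_num
  ring

lemma sq_exp_neg_sq_div (σ y : ℝ) :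
    exp (-y ^ 2 / (2 * σ ^ 2)) ^ 2 = exp (-(2 / (2 * σ ^ 2) * y ^ 2)) := by
  rw [← exp_nat_mul]
  ring_nf

/-- The constant left over when completing the square in `exp_mul_exp_doppler`. -/
noncomputable def overlapExponent (μ σ ξ : ℝ) : ℝ :=
  μ ^ 2 / (2 * σ ^ 2) * ((ξ - 1) ^ 2 / (1 + ξ ^ 2))

lemma exp_mul_exp_doppler (μ σ ξ x : ℝ) :
    exp (-(x - μ) ^ 2 / (2 * σ ^ 2)) * exp (-(ξ * x - μ) ^ 2 / (2 * σ ^ 2)) =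
      exp (-overlapExponent μ σ ξ) *
        exp (-((1 + ξ ^ 2) / (2 * σ ^ 2) * (x - μ * (1 + ξ) / (1 + ξ ^ 2)) ^ 2)) := by
  have h : 1 + ξ ^ 2 ≠ 0 := by positivity
  rw [← exp_add, ← exp_add, overlapExponent]
  congr 1
  field_simp
  ring

section ClosedForms

variable {μ σ : ℝ}

lemma hgCoeff_one (hσ : 0 < σ) (ξ : ℝ) :
    hgCoeff 1 μ σ ξ = 2 / (σ * √(σ * 2 * √π)) * exp (-overlapExponent μ σ ξ) *
      (μ * ξ * (ξ - 1) / (1 + ξ ^ 2)) * √(π / ((1 + ξ ^ 2) / (2 * σ ^ 2))) := by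
  set C := 2 / (σ * √(σ * 2 * √π))
  have hξ : 1 + ξ ^ 2 ≠ 0 := by positivity
  have integrand : ∀ x, hermiteGaussian 1 μ σ x * dopplerDiff μ σ ξ x =
      C * ((x - μ) * exp (-(2 / (2 * σ ^ 2) * (x - μ) ^ 2))) - C * exp (-overlapExponent μ σ ξ) *
        ((x - μ) * exp (-((1 + ξ ^ 2) / (2 * σ ^ 2) * (x - μ * (1 + ξ) / (1 + ξ ^ 2)) ^ 2))) := by
    intro x
    rw [hermiteGaussian_one, dopplerDiff]
    linear_combination C * (x - μ) * sq_exp_neg_sq_div σ (x - μ) -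
      C * (x - μ) * exp_mul_exp_doppler μ σ ξ x
  have center : μ * (1 + ξ) / (1 + ξ ^ 2) - μ = -(μ * ξ * (ξ - 1) / (1 + ξ ^ 2)) := by
    field_simp
    ring
  have hB : (0 : ℝ) < 2 / (2 * σ ^ 2) := by positivity
  have hA : 0 < (1 + ξ ^ 2) / (2 * σ ^ 2) := by positivity
  rw [hgCoeff]
  simp_rw [integrand]
  rw [integral_sub ((integrable_sub_mul_exp_neg_mul_sub_sq hB μ μ).const_mul _)
      ((integrable_sub_mul_exp_neg_mul_sub_sq hA μ _).const_mul _),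
    integral_const_mul, integral_const_mul, integral_sub_mul_exp_neg_mul_sub_sq hB,
    integral_sub_mul_exp_neg_mul_sub_sq hA, center]
  ring

lemma hgCoeff_one_sq (hσ : 0 < σ) (ξ : ℝ) :
    hgCoeff 1 μ σ ξ ^ 2 = 4 * √π / σ * (μ * ξ) ^ 2 / (1 + ξ ^ 2) ^ 3 *
      exp (-overlapExponent μ σ ξ) ^ 2 * (ξ - 1) ^ 2 := by
  have hξ : 1 + ξ ^ 2 ≠ 0 := by positivity
  have hπ : 0 < √π := sqrt_pos.2 pi_pos
  have hC : √(σ * 2 * √π) ^ 2 = σ * 2 * √π := sq_sqrt (by positivity)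
  have hs : √(2 / (1 + ξ ^ 2)) ^ 2 = 2 / (1 + ξ ^ 2) := sq_sqrt (by positivity)
  rw [hgCoeff_one hσ, sqrt_pi_div_div_two_mul_sq hσ.le]
  simp only [mul_pow, div_pow, hC, hs]
  field_simp
  ring

lemma integral_dopplerDiff_sq (hσ : 0 < σ) {ξ : ℝ} (hξ : ξ ≠ 0) :
    ∫ x, dopplerDiff μ σ ξ x ^ 2 =
      σ * √π * (1 + |ξ|⁻¹ - 2 * exp (-overlapExponent μ σ ξ) * √(2 / (1 + ξ ^ 2))) := by
  have integrand : ∀ x, dopplerDiff μ σ ξ x ^ 2 =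
      exp (-(2 / (2 * σ ^ 2) * (x - μ) ^ 2)) - 2 * exp (-overlapExponent μ σ ξ) *
        exp (-((1 + ξ ^ 2) / (2 * σ ^ 2) * (x - μ * (1 + ξ) / (1 + ξ ^ 2)) ^ 2)) +
        exp (-(2 / (2 * σ ^ 2) * (ξ * x - μ) ^ 2)) := by
    intro x
    rw [dopplerDiff]
    linear_combination sq_exp_neg_sq_div σ (x - μ) - 2 * exp_mul_exp_doppler μ σ ξ x +
      sq_exp_neg_sq_div σ (ξ * x - μ)
  have hB : (0 : ℝ) < 2 / (2 * σ ^ 2) := by positivity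
  have hA : 0 < (1 + ξ ^ 2) / (2 * σ ^ 2) := by positivity
  have h₁ := integrable_exp_neg_mul_sub_sq hB μ
  have h₂ := (integrable_exp_neg_mul_sub_sq hA (μ * (1 + ξ) / (1 + ξ ^ 2))).const_mul
    (2 * exp (-overlapExponent μ σ ξ))
  simp_rw [integrand]
  rw [integral_add (h₁.sub' h₂) (integrable_exp_neg_mul_mul_sub_sq hB hξ μ), integral_sub h₁ h₂,
    integral_const_mul, integral_exp_neg_mul_sub_sq, integral_exp_neg_mul_sub_sq,
    integral_exp_neg_mul_mul_sub_sq, sqrt_pi_div_div_two_mul_sq hσ.le,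
    sqrt_pi_div_div_two_mul_sq hσ.le, div_self two_ne_zero, sqrt_one]
  ring

end ClosedForms

lemma Filter.Tendsto.of_continuousAt_of_eventuallyEq {X Y : Type*} [TopologicalSpace X]
    [TopologicalSpace Y] {f F : X → Y} {a : X} {s : Set X} {b : Y} (hF : ContinuousAt F a)
    (hb : F a = b) (h : ∀ᶠ x in 𝓝[s] a, F x = f x) : Tendsto f (𝓝[s] a) (𝓝 b) :=
  hb ▸ (hF.tendsto.mono_left nhdsWithin_le_nhds).congr' h

lemma eventually_pos_and_ne_one : ∀ᶠ ξ : ℝ in 𝓝[≠] 1, 0 < ξ ∧ ξ ≠ 1 :=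
  ((eventually_gt_nhds one_pos).filter_mono nhdsWithin_le_nhds).and self_mem_nhdsWithin

lemma tendsto_one_sub_exp_neg_overlapExponent_div (μ σ : ℝ) :
    Tendsto (fun ξ => (1 - exp (-overlapExponent μ σ ξ)) / (ξ - 1) ^ 2) (𝓝[≠] 1)
      (𝓝 (μ ^ 2 / (4 * σ ^ 2))) := by
  -- `1 - exp (-u) = u * dslope _ 0 u` with the slope continuous at `0`: no need to keep `u ≠ 0`.
  have hf : HasDerivAt (fun u : ℝ => 1 - exp (-u)) 1 0 := by
    simpa using ((hasDerivAt_neg (0 : ℝ)).exp).const_sub 1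
  have hK : ContinuousAt (overlapExponent μ σ) 1 := by
    unfold overlapExponent
    fun_prop (disch := positivity)
  have hK₁ : overlapExponent μ σ 1 = 0 := by simp [overlapExponent]
  refine Tendsto.of_continuousAt_of_eventuallyEq
    (F := fun ξ => μ ^ 2 / (2 * σ ^ 2) * (1 + ξ ^ 2)⁻¹ *
      dslope (fun u => 1 - exp (-u)) 0 (overlapExponent μ σ ξ))
    ?_ ?_ ?_
  · exact (continuousAt_const.mul (by fun_prop (disch := positivity))).mul
      ((continuousAt_dslope_same.2 hf.differentiableAt).comp_of_eq hK hK₁)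
  · rw [hK₁, dslope_same, hf.deriv]
    ring
  · filter_upwards [self_mem_nhdsWithin] with ξ hξ
    have hξ : ξ - 1 ≠ 0 := sub_ne_zero.2 hξ
    have h := sub_smul_dslope (fun u => 1 - exp (-u)) 0 (overlapExponent μ σ ξ)
    simp only [sub_zero, smul_eq_mul, neg_zero, exp_zero, sub_self] at h
    rw [← h, overlapExponent]
    field_simp

lemma tendsto_one_add_inv_sub_two_mul_sqrt_div_sq :
    Tendsto (fun ξ : ℝ => (1 + ξ⁻¹ - 2 * √(2 / (1 + ξ ^ 2))) / (ξ - 1) ^ 2) (𝓝[≠] 1)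
      (𝓝 (3 / 4)) := by
  refine Tendsto.of_continuousAt_of_eventuallyEq
    (F := fun ξ => (ξ ^ 2 + 4 * ξ + 1) / (ξ ^ 2 * (1 + ξ ^ 2) * (1 + ξ⁻¹ + 2 * √(2 / (1 + ξ ^ 2)))))
    ?_ ?_ ?_
  · fun_prop (disch := norm_num)
  · norm_num
  · filter_upwards [eventually_pos_and_ne_one] with ξ ⟨hξ, hξ₁⟩
    have hξ₁ : ξ - 1 ≠ 0 := sub_ne_zero.2 hξ₁
    have hs : √(2 / (1 + ξ ^ 2)) ^ 2 * (1 + ξ ^ 2) = 2 := by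
      rw [sq_sqrt (by positivity)]
      field_simp
    rw [div_eq_div_iff (by positivity) (by positivity)]
    field_simp
    linear_combination 4 * ξ ^ 2 * hs

section Limits

variable {μ σ : ℝ}

lemma tendsto_hgCoeff_one_sq_div (hσ : 0 < σ) :
    Tendsto (fun ξ => hgCoeff 1 μ σ ξ ^ 2 / (ξ - 1) ^ 2) (𝓝[≠] 1)
      (𝓝 (μ ^ 2 * √π / (2 * σ))) := by
  refine Tendsto.of_continuousAt_of_eventuallyEq
    (F := fun ξ => 4 * √π / σ * (μ * ξ) ^ 2 / (1 + ξ ^ 2) ^ 3 * exp (-overlapExponent μ σ ξ) ^ 2)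
    ?_ ?_ ?_
  · unfold overlapExponent
    fun_prop (disch := positivity)
  · simp only [overlapExponent, sub_self]
    field_simp
    norm_num
    ring
  · filter_upwards [self_mem_nhdsWithin] with ξ hξ
    rw [hgCoeff_one_sq hσ, mul_div_cancel_right₀ _ (pow_ne_zero 2 (sub_ne_zero.2 hξ))]

lemma tendsto_integral_dopplerDiff_sq_div (hσ : 0 < σ) :
    Tendsto (fun ξ => (∫ x, dopplerDiff μ σ ξ x ^ 2) / (ξ - 1) ^ 2) (𝓝[≠] 1)
      (𝓝 (σ * √π * (3 / 4 + μ ^ 2 / (2 * σ ^ 2)))) := by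
  have hs : Tendsto (fun ξ : ℝ => √(2 / (1 + ξ ^ 2))) (𝓝[≠] 1) (𝓝 1) := by
    refine Tendsto.of_continuousAt_of_eventuallyEq (by fun_prop (disch := positivity)) ?_
      (Eventually.of_forall fun _ => rfl)
    norm_num
  have h := (tendsto_one_add_inv_sub_two_mul_sqrt_div_sq.add
    ((hs.const_mul 2).mul (tendsto_one_sub_exp_neg_overlapExponent_div μ σ))).const_mul (σ * √π)
  rw [show σ * √π * (3 / 4 + μ ^ 2 / (2 * σ ^ 2)) =
    σ * √π * (3 / 4 + 2 * 1 * (μ ^ 2 / (4 * σ ^ 2))) by ring]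
  refine h.congr' ?_
  filter_upwards [eventually_pos_and_ne_one] with ξ ⟨hξ, hξ₁⟩
  have hξ₁ : ξ - 1 ≠ 0 := sub_ne_zero.2 hξ₁
  rw [integral_dopplerDiff_sq hσ hξ.ne', abs_of_pos hξ]
  field_simp
  ring

end Limits

open Filter in
theorem limit_c1_sq_over_norm_sq (μ σ : ℝ) (hσ : 0 < σ) (hμ : μ ≠ 0) :
    Tendsto (fun ξ : ℝ => (hgCoeff 1 μ σ ξ) ^ 2 / ∫ x : ℝ, (dopplerDiff μ σ ξ x) ^ 2)
      (nhdsWithin 1 {(1 : ℝ)}ᶜ) (nhds (1 / (1 + 3 * σ ^ 2 / (2 * μ ^ 2)))) := by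
  have hlimit : μ ^ 2 * √π / (2 * σ) / (σ * √π * (3 / 4 + μ ^ 2 / (2 * σ ^ 2))) =
      1 / (1 + 3 * σ ^ 2 / (2 * μ ^ 2)) := by
    have : 0 < √π := sqrt_pos.2 pi_pos
    field_simp
    ring
  rw [← hlimit]
  refine ((tendsto_hgCoeff_one_sq_div hσ).div (tendsto_integral_dopplerDiff_sq_div hσ)
    (by positivity)).congr' ?_
  filter_upwards [self_mem_nhdsWithin] with ξ hξ
  exact div_div_div_cancel_right₀ (pow_ne_zero 2 (sub_ne_zero.2 hξ)) _ _
end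

section
/- If the Doppler shift is modeled as an additive wavelength shift, i.e., g_add(x; δ) = e^{-(x-μ)²/(2σ²)} - e^{-(x+δ-μ)²/(2σ²)}, expanded in the Hermite-Gaussian basis ψ_n(·; μ, σ) with coefficients c_n(δ), then the standardized approximation error using only the first-degree term tends to zero: lim_{δ→0} ∫ (g_add(x;δ) - c_1(δ)ψ_1(x;μ,σ))² dx / ∫ g_add(x;δ)² dx = 0. -/
open Real MeasureTheory

/-- The difference between a Gaussian and an additively shifted version of it. -/
noncomputable def addDiff (μ σ δ x : ℝ) : ℝ :=
  Real.exp (-(x - μ) ^ 2 / (2 * σ ^ 2)) - Real.exp (-(x + δ - μ) ^ 2 / (2 * σ ^ 2))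

/-- The Hermite-Gaussian expansion coefficients of the additive-shift difference. -/
noncomputable def addCoeff (n : ℕ) (μ σ δ : ℝ) : ℝ :=
  ∫ x : ℝ, hermiteGaussian n μ σ x * addDiff μ σ δ x

/-!
A product of two Gaussians of the same width is again a Gaussian, so every integral in the
statement is an explicit Gaussian moment. Writing `u = δ² / (4σ²)`, one finds
`∫ g_add² = 2σ√π (1 - e^{-u})` and `c₁(δ)² = 2σ√π u e^{-2u}`. Since `ψ₁` has unit norm, the
numerator equals `∫ g_add² - c₁²`, so the ratio is `1 - u e^{-2u} / (1 - e^{-u})`, which tends to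
`0` because `1 - e^{-u} ~ u` as `u → 0`.
-/

open Filter Topology

section GaussianMoments

variable {b : ℝ}

lemma hasDerivAt_exp_neg_mul_sq (x : ℝ) :
    HasDerivAt (fun x : ℝ => exp (-b * x ^ 2)) (-(2 * b) * (x * exp (-b * x ^ 2))) x :=
  ((hasDerivAt_pow 2 x).const_mul (-b)).exp.congr_deriv (by ring)

variable (hb : 0 < b)
include hb

lemma integrable_pow_mul_exp_neg_mul_sq (k : ℕ) :
    Integrable fun x : ℝ => x ^ k * exp (-b * x ^ 2) := by
  simpa [rpow_natCast] using
    integrable_rpow_mul_exp_neg_mul_sq hb (s := k) (by linarith [k.cast_nonneg (α := ℝ)])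

lemma integrable_add_pow_mul_exp_neg_mul_sq (d : ℝ) (k : ℕ) :
    Integrable fun x : ℝ => (x + d) ^ k * exp (-b * x ^ 2) := by
  simp_rw [add_pow, Finset.sum_mul]
  refine integrable_finsetSum _ fun i _ => ?_
  simpa only [mul_right_comm _ (exp _), mul_assoc] using
    ((integrable_pow_mul_exp_neg_mul_sq hb i).mul_const (d ^ (k - i) * (k.choose i : ℝ)))

lemma integral_mul_exp_neg_mul_sq : ∫ x : ℝ, x * exp (-b * x ^ 2) = 0 := by
  have h := integral_eq_zero_of_hasDerivAt_of_integrable (hasDerivAt_exp_neg_mul_sq (b := b))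
    ((integrable_mul_exp_neg_mul_sq hb).const_mul _) (integrable_exp_neg_mul_sq hb)
  rwa [integral_const_mul, mul_eq_zero, or_iff_right (by linarith)] at h

lemma integral_add_mul_exp_neg_mul_sq (d : ℝ) :
    ∫ x : ℝ, (x + d) * exp (-b * x ^ 2) = d * √(π / b) := by
  simp_rw [add_mul]
  rw [integral_add (integrable_mul_exp_neg_mul_sq hb) ((integrable_exp_neg_mul_sq hb).const_mul d),
    integral_mul_exp_neg_mul_sq hb, integral_const_mul, integral_gaussian, zero_add]

lemma integral_sq_mul_exp_neg_mul_sq :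
    ∫ x : ℝ, x ^ 2 * exp (-b * x ^ 2) = √(π / b) / (2 * b) := by
  have hderiv (x : ℝ) : HasDerivAt (fun x : ℝ => x * exp (-b * x ^ 2))
      (exp (-b * x ^ 2) - 2 * b * (x ^ 2 * exp (-b * x ^ 2))) x :=
    ((hasDerivAt_id' x).fun_mul (hasDerivAt_exp_neg_mul_sq x)).congr_deriv (by ring)
  have hsq := (integrable_pow_mul_exp_neg_mul_sq hb 2).const_mul (2 * b)
  have h := integral_eq_zero_of_hasDerivAt_of_integrable hderiv
    ((integrable_exp_neg_mul_sq hb).sub hsq) (integrable_mul_exp_neg_mul_sq hb)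
  rw [integral_sub (integrable_exp_neg_mul_sq hb) hsq, integral_const_mul, integral_gaussian,
    sub_eq_zero] at h
  rw [h, mul_div_cancel_left₀ _ (by positivity)]

end GaussianMoments

noncomputable def gaussian (σ s x : ℝ) : ℝ := exp (-(x - s) ^ 2 / (2 * σ ^ 2))

section GaussianProducts

variable {σ : ℝ}

lemma gaussian_mul_gaussian (hσ : σ ≠ 0) (s t x : ℝ) :
    gaussian σ s x * gaussian σ t x =
      exp (-(s - t) ^ 2 / (4 * σ ^ 2)) * exp (-(σ ^ 2)⁻¹ * (x - (s + t) / 2) ^ 2) := by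
  rw [gaussian, gaussian, ← exp_add, ← exp_add]
  congr 1
  field_simp
  ring

lemma sub_pow_mul_gaussian_mul_gaussian (hσ : σ ≠ 0) (k : ℕ) (s t x : ℝ) :
    (x - s) ^ k * (gaussian σ s x * gaussian σ t x) =
      exp (-(s - t) ^ 2 / (4 * σ ^ 2)) *
        ((x - (s + t) / 2 + (t - s) / 2) ^ k * exp (-(σ ^ 2)⁻¹ * (x - (s + t) / 2) ^ 2)) := by
  rw [gaussian_mul_gaussian hσ]
  ring_nf

lemma integrable_sub_pow_mul_gaussian_mul_gaussian (hσ : σ ≠ 0) (k : ℕ) (s t : ℝ) :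
    Integrable fun x : ℝ => (x - s) ^ k * (gaussian σ s x * gaussian σ t x) := by
  simp_rw [sub_pow_mul_gaussian_mul_gaussian hσ]
  exact ((integrable_add_pow_mul_exp_neg_mul_sq (by positivity) _ k).comp_sub_right _).const_mul _

lemma integral_sub_pow_mul_gaussian_mul_gaussian (hσ : σ ≠ 0) (k : ℕ) (s t : ℝ) :
    ∫ x : ℝ, (x - s) ^ k * (gaussian σ s x * gaussian σ t x) =
      exp (-(s - t) ^ 2 / (4 * σ ^ 2)) *
        ∫ y : ℝ, (y + (t - s) / 2) ^ k * exp (-(σ ^ 2)⁻¹ * y ^ 2) := by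
  simp_rw [sub_pow_mul_gaussian_mul_gaussian hσ, integral_const_mul]
  rw [integral_sub_right_eq_self (fun y => (y + (t - s) / 2) ^ k * exp (-(σ ^ 2)⁻¹ * y ^ 2))]

variable (hσ : 0 < σ)
include hσ

lemma sqrt_pi_div_inv_sq : √(π / (σ ^ 2)⁻¹) = σ * √π := by
  rw [div_inv_eq_mul, mul_comm, sqrt_mul (sq_nonneg σ), sqrt_sq hσ.le]

lemma integrable_gaussian_mul_gaussian (s t : ℝ) :
    Integrable fun x : ℝ => gaussian σ s x * gaussian σ t x := by
  simpa using integrable_sub_pow_mul_gaussian_mul_gaussian hσ.ne' 0 s t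

lemma integral_gaussian_mul_gaussian (s t : ℝ) :
    ∫ x : ℝ, gaussian σ s x * gaussian σ t x = σ * √π * exp (-(s - t) ^ 2 / (4 * σ ^ 2)) := by
  have h := integral_sub_pow_mul_gaussian_mul_gaussian hσ.ne' 0 s t
  simp only [pow_zero, one_mul, integral_gaussian, sqrt_pi_div_inv_sq hσ] at h
  rw [h]
  ring

lemma integrable_sub_mul_gaussian_mul_gaussian (s t : ℝ) :
    Integrable fun x : ℝ => (x - s) * (gaussian σ s x * gaussian σ t x) := by
  simpa using integrable_sub_pow_mul_gaussian_mul_gaussian hσ.ne' 1 s t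

end GaussianProducts

lemma integral_sub_mul_sq_of_integral_sq_eq_one {α : Type*} [MeasurableSpace α] {ν : Measure α}
    {f ψ : α → ℝ} {c : ℝ} (hf : Integrable (fun x => f x ^ 2) ν)
    (hψ : Integrable (fun x => ψ x ^ 2) ν) (hψf : Integrable (fun x => ψ x * f x) ν)
    (hψ_norm : ∫ x, ψ x ^ 2 ∂ν = 1) (hc : ∫ x, ψ x * f x ∂ν = c) :
    ∫ x, (f x - c * ψ x) ^ 2 ∂ν = ∫ x, f x ^ 2 ∂ν - c ^ 2 := by
  have hexpand : (fun x => (f x - c * ψ x) ^ 2) =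
      fun x => f x ^ 2 - 2 * c * (ψ x * f x) + c ^ 2 * ψ x ^ 2 := by
    funext x; ring
  rw [hexpand, integral_add ?_ (hψ.const_mul _), integral_sub hf (hψf.const_mul _),
    integral_const_mul, integral_const_mul, hψ_norm, hc]
  · ring
  · exact hf.sub (hψf.const_mul _)

lemma tendsto_mul_exp_neg_sq_div_one_sub_exp_neg :
    Tendsto (fun u : ℝ => u * exp (-u) ^ 2 / (1 - exp (-u))) (𝓝[≠] 0) (𝓝 1) := by
  have hslope : Tendsto (fun u : ℝ => (1 - exp (-u)) / u) (𝓝[≠] 0) (𝓝 1) := by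
    have h : HasDerivAt (fun u : ℝ => 1 - exp (-u)) 1 0 := by
      simpa using ((hasDerivAt_neg 0).exp).const_sub 1
    refine (hasDerivAt_iff_tendsto_slope.mp h).congr fun u => ?_
    simp [slope_def_field]
  have hexp : Tendsto (fun u : ℝ => exp (-u) ^ 2) (𝓝[≠] 0) (𝓝 1) := by
    have hcont : Continuous fun u : ℝ => exp (-u) ^ 2 := by fun_prop
    simpa using (hcont.tendsto 0).mono_left nhdsWithin_le_nhds
  have h := hexp.div hslope one_ne_zero
  rw [div_one] at h
  refine h.congr fun u => ?_
  rw [Pi.div_apply, div_div_eq_mul_div, mul_comm]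

lemma tendsto_sq_div_const_nhdsNE {c : ℝ} (hc : c ≠ 0) :
    Tendsto (fun x : ℝ => x ^ 2 / c) (𝓝[≠] 0) (𝓝[≠] 0) := by
  refine tendsto_nhdsWithin_of_tendsto_nhds_of_eventually_within _ ?_ ?_
  · have hcont : Continuous fun x : ℝ => x ^ 2 / c := by fun_prop
    simpa using (hcont.tendsto 0).mono_left nhdsWithin_le_nhds
  · filter_upwards [self_mem_nhdsWithin] with x (hx : x ≠ 0)
    exact div_ne_zero (pow_ne_zero 2 hx) hc

section AdditiveShift

variable {μ σ : ℝ}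

lemma addDiff_eq_gaussian_sub_gaussian (δ x : ℝ) :
    addDiff μ σ δ x = gaussian σ μ x - gaussian σ (μ - δ) x := by
  rw [addDiff, gaussian, gaussian, sub_sub_eq_add_sub]

lemma hermiteGaussian_one_eq (x : ℝ) :
    hermiteGaussian 1 μ σ x = 2 / (σ * √(σ * 2 * √π)) * ((x - μ) * gaussian σ μ x) := by
  simp only [hermiteGaussian, physHermite_one, gaussian, pow_one, Nat.factorial_one, Nat.cast_one,
    mul_one]
  ring

lemma addDiff_sq_eq (δ x : ℝ) :
    addDiff μ σ δ x ^ 2 =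
      gaussian σ μ x * gaussian σ μ x - 2 * (gaussian σ μ x * gaussian σ (μ - δ) x) +
        gaussian σ (μ - δ) x * gaussian σ (μ - δ) x := by
  rw [addDiff_eq_gaussian_sub_gaussian]
  ring

lemma hermiteGaussian_one_sq_eq (x : ℝ) :
    hermiteGaussian 1 μ σ x ^ 2 =
      (2 / (σ * √(σ * 2 * √π))) ^ 2 * ((x - μ) ^ 2 * (gaussian σ μ x * gaussian σ μ x)) := by
  rw [hermiteGaussian_one_eq]
  ring

lemma hermiteGaussian_one_mul_addDiff_eq (δ x : ℝ) :
    hermiteGaussian 1 μ σ x * addDiff μ σ δ x =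
      2 / (σ * √(σ * 2 * √π)) * ((x - μ) * (gaussian σ μ x * gaussian σ μ x) -
        (x - μ) * (gaussian σ μ x * gaussian σ (μ - δ) x)) := by
  rw [hermiteGaussian_one_eq, addDiff_eq_gaussian_sub_gaussian]
  ring

variable (hσ : 0 < σ)
include hσ

lemma integrable_addDiff_sq (δ : ℝ) : Integrable fun x : ℝ => addDiff μ σ δ x ^ 2 := by
  have hgg := integrable_gaussian_mul_gaussian hσ
  simp_rw [addDiff_sq_eq]
  exact ((hgg _ _).sub ((hgg _ _).const_mul 2)).add (hgg _ _)

lemma integral_addDiff_sq (δ : ℝ) :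
    ∫ x : ℝ, addDiff μ σ δ x ^ 2 = 2 * σ * √π * (1 - exp (-(δ ^ 2 / (4 * σ ^ 2)))) := by
  have hgg := integrable_gaussian_mul_gaussian hσ
  simp_rw [addDiff_sq_eq]
  rw [integral_add ?_ (hgg _ _), integral_sub (hgg _ _) ((hgg _ _).const_mul 2), integral_const_mul]
  · simp only [integral_gaussian_mul_gaussian hσ, sub_self, sub_sub_cancel, neg_div,
      zero_pow two_ne_zero, zero_div, neg_zero, exp_zero]
    ring
  · exact (hgg _ _).sub ((hgg _ _).const_mul 2)

lemma integrable_hermiteGaussian_one_sq : Integrable fun x : ℝ => hermiteGaussian 1 μ σ x ^ 2 := by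
  simp_rw [hermiteGaussian_one_sq_eq]
  exact (integrable_sub_pow_mul_gaussian_mul_gaussian hσ.ne' 2 μ μ).const_mul _

lemma integral_hermiteGaussian_one_sq : ∫ x : ℝ, hermiteGaussian 1 μ σ x ^ 2 = 1 := by
  simp_rw [hermiteGaussian_one_sq_eq]
  rw [integral_const_mul, integral_sub_pow_mul_gaussian_mul_gaussian hσ.ne' 2 μ μ]
  simp only [sub_self, zero_div, add_zero, zero_pow two_ne_zero, neg_zero, exp_zero, one_mul,
    integral_sq_mul_exp_neg_mul_sq (inv_pos.2 (pow_pos hσ 2)), sqrt_pi_div_inv_sq hσ]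
  have hπ : 0 < √π := sqrt_pos.2 pi_pos
  rw [div_pow, mul_pow, sq_sqrt (by positivity)]
  field_simp

lemma integrable_hermiteGaussian_one_mul_addDiff (δ : ℝ) :
    Integrable fun x : ℝ => hermiteGaussian 1 μ σ x * addDiff μ σ δ x := by
  simp_rw [hermiteGaussian_one_mul_addDiff_eq]
  exact ((integrable_sub_mul_gaussian_mul_gaussian hσ _ _).sub
    (integrable_sub_mul_gaussian_mul_gaussian hσ _ _)).const_mul _

lemma addCoeff_one (δ : ℝ) :
    addCoeff 1 μ σ δ =
      2 / (σ * √(σ * 2 * √π)) * (δ / 2) * (σ * √π) * exp (-(δ ^ 2 / (4 * σ ^ 2))) := by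
  have h t := integral_sub_pow_mul_gaussian_mul_gaussian hσ.ne' 1 μ t
  simp only [pow_one, integral_add_mul_exp_neg_mul_sq (inv_pos.2 (pow_pos hσ 2)),
    sqrt_pi_div_inv_sq hσ] at h
  rw [addCoeff]
  simp_rw [hermiteGaussian_one_mul_addDiff_eq]
  rw [integral_const_mul, integral_sub (integrable_sub_mul_gaussian_mul_gaussian hσ _ _)
    (integrable_sub_mul_gaussian_mul_gaussian hσ _ _), h, h]
  simp only [sub_self, sub_sub_cancel, sub_sub_cancel_left, zero_div, zero_mul, mul_zero, neg_div]
  ring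

lemma integral_addDiff_sq_pos {δ : ℝ} (hδ : δ ≠ 0) : 0 < ∫ x : ℝ, addDiff μ σ δ x ^ 2 := by
  have hu : 0 < δ ^ 2 / (4 * σ ^ 2) := by positivity
  have hE : 0 < 1 - exp (-(δ ^ 2 / (4 * σ ^ 2))) := sub_pos.2 (exp_lt_one_iff.2 (neg_neg_of_pos hu))
  have hπ : 0 < √π := sqrt_pos.2 pi_pos
  rw [integral_addDiff_sq hσ]
  positivity

lemma addCoeff_one_sq_div_integral_addDiff_sq (δ : ℝ) :
    addCoeff 1 μ σ δ ^ 2 / ∫ x : ℝ, addDiff μ σ δ x ^ 2 =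
      δ ^ 2 / (4 * σ ^ 2) * exp (-(δ ^ 2 / (4 * σ ^ 2))) ^ 2 /
        (1 - exp (-(δ ^ 2 / (4 * σ ^ 2)))) := by
  have hπ : 0 < √π := sqrt_pos.2 pi_pos
  rw [addCoeff_one hσ, integral_addDiff_sq hσ]
  simp only [mul_pow, div_pow]
  rw [sq_sqrt (by positivity), sq_sqrt pi_pos.le]
  field_simp
  rw [sq_sqrt pi_pos.le]
  ring

end AdditiveShift

open Filter in
theorem standardized_approx_error_additive_limit (μ σ : ℝ) (hσ : 0 < σ) :
    Tendsto
      (fun δ : ℝ =>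
        (∫ x : ℝ, (addDiff μ σ δ x - addCoeff 1 μ σ δ * hermiteGaussian 1 μ σ x) ^ 2) /
          (∫ x : ℝ, (addDiff μ σ δ x) ^ 2))
      (nhdsWithin 0 {(0 : ℝ)}ᶜ) (nhds 0) := by
  have hlim := tendsto_const_nhds (x := (1 : ℝ)).sub
    (tendsto_mul_exp_neg_sq_div_one_sub_exp_neg.comp (tendsto_sq_div_const_nhdsNE (c := 4 * σ ^ 2)
      (by positivity)))
  rw [sub_self] at hlim
  refine hlim.congr' ?_
  filter_upwards [self_mem_nhdsWithin] with δ (hδ : δ ≠ 0)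
  symm
  rw [integral_sub_mul_sq_of_integral_sq_eq_one (c := addCoeff 1 μ σ δ) (integrable_addDiff_sq hσ δ)
    (integrable_hermiteGaussian_one_sq hσ) (integrable_hermiteGaussian_one_mul_addDiff hσ δ)
    (integral_hermiteGaussian_one_sq hσ) rfl, sub_div, div_self (integral_addDiff_sq_pos hσ hδ).ne',
    addCoeff_one_sq_div_integral_addDiff_sq hσ]
  rfl
end
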